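/- arXiv:1905.00113 — 3 statements merged into one kernel-verified Lean document; each statement's English description precedes it below -/
import Mathlib

section
/- Let Φ be a frame for H, A ∈ B(H) with ‖Id − A‖ < 1 (hence A invertible), and let Θ ∈ B(H, ℓ²) satisfy T_Φ Θ = 0. Define the approximately dual frame Φ_Θ^{ad}(A) with n-th element A* S_Φ⁻¹ φₙ + Θ*(δₙ), where (δₙ) is the canonical basis of ℓ². Then its analysis operator U satisfies ‖U‖² ≥ 1/(m_Φ^{opt} ‖A⁻¹‖²), where m_Φ^{opt} is the optimal lower frame bound of Φ. -/
open ContinuousLinearMap MeasureTheory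
open scoped InnerProductSpace ComplexConjugate

noncomputable section

notation "ℓ²" => lp (fun _ : ℕ => ℂ) 2

variable {H : Type} [NormedAddCommGroup H] [InnerProductSpace ℂ H] [CompleteSpace H]

/-- `Φ = (φₙ)` is a frame for `H` with lower bound `m` and upper bound `M`. -/
def IsFrame (φ : ℕ → H) (m M : ℝ) : Prop :=
  0 < m ∧ 0 < M ∧ ∀ f : H,
    m * ‖f‖ ^ 2 ≤ ∑' n, ‖(inner ℂ (φ n) f : ℂ)‖ ^ 2 ∧
    ∑' n, ‖(inner ℂ (φ n) f : ℂ)‖ ^ 2 ≤ M * ‖f‖ ^ 2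

/-- `Φ = (φₙ)` is a Bessel sequence with bound `M`. -/
def IsBessel (φ : ℕ → H) (M : ℝ) : Prop :=
  0 < M ∧ ∀ f : H, ∑' n, ‖(inner ℂ (φ n) f : ℂ)‖ ^ 2 ≤ M * ‖f‖ ^ 2

/-- `U` is the analysis operator of the sequence `Φ = (φₙ)`, i.e. `U f = (⟨f, φₙ⟩)ₙ`. -/
def IsAnalysis (φ : ℕ → H) (U : H →L[ℂ] ℓ²) : Prop :=
  ∀ (f : H) (n : ℕ), U f n = (inner ℂ (φ n) f : ℂ)

/-- Orthogonal projection onto a closed submodule, as an endomorphism. -/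
def orthProj {E : Type} [NormedAddCommGroup E] [InnerProductSpace ℂ E] [CompleteSpace E]
    (K : Submodule ℂ E) (hK : IsClosed (K : Set E)) : E →L[ℂ] E :=
  haveI := hK.completeSpace_coe
  K.subtypeL.comp (K.orthogonalProjection)

/-- Orthogonal projection onto a closed submodule, with values in the submodule. -/
def orthProjTo {E : Type} [NormedAddCommGroup E] [InnerProductSpace ℂ E] [CompleteSpace E]
    (K : Submodule ℂ E) (hK : IsClosed (K : Set E)) : E →L[ℂ] K :=
  haveI := hK.completeSpace_coe
  K.orthogonalProjection

/-- The gap `δ(X, Y) = ‖(Id - P_Y)|_X‖` from `X` to a closed subspace `Y`. -/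
def gap {E : Type} [NormedAddCommGroup E] [InnerProductSpace ℂ E] [CompleteSpace E]
    (X Y : Submodule ℂ E) (hY : IsClosed (Y : Set E)) : ℝ :=
  ‖(ContinuousLinearMap.id ℂ E - orthProj Y hY).comp X.subtypeL‖

/-!
Since `T_Φ U_ad = A`, taking adjoints gives `A^* = U_ad^* U_Φ`, hence `f = (A⁻¹)^* U_ad^* U_Φ f`
and `‖f‖ ≤ ‖A⁻¹‖ ‖U_ad‖ ‖U_Φ f‖` for every `f`. So `1 / (‖A⁻¹‖² ‖U_ad‖²)` is a lower frame
bound of `Φ`, and therefore at most the optimal one.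
-/

/-- The approximately dual sequence `Φ_Θ^{ad}(A)`, with `Sinv` standing for `S_Φ⁻¹`. -/
def approxDual (φ : ℕ → H) (Sinv A : H →L[ℂ] H) (Θ : H →L[ℂ] ℓ²) : ℕ → H :=
  fun n => adjoint A (Sinv (φ n)) + adjoint Θ (lp.single 2 n (1 : ℂ))

namespace IsAnalysis

variable {φ ψ : ℕ → H} {U V : H →L[ℂ] ℓ²}

omit [CompleteSpace H] in
theorem unique (hU : IsAnalysis φ U) (hV : IsAnalysis φ V) : U = V := by
  ext f n
  rw [hU f n, hV f n]

omit [CompleteSpace H] in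
theorem add (hU : IsAnalysis φ U) (hV : IsAnalysis ψ V) : IsAnalysis (φ + ψ) (U + V) := by
  intro f n
  rw [add_apply, lp.coeFn_add, Pi.add_apply, hU f n, hV f n, Pi.add_apply, inner_add_left]

theorem map {K : Type} [NormedAddCommGroup K] [InnerProductSpace ℂ K] [CompleteSpace K]
    (hU : IsAnalysis φ U) (B : H →L[ℂ] K) :
    IsAnalysis (fun n => B (φ n)) (U ∘L adjoint B) := by
  intro f n
  rw [comp_apply, hU, adjoint_inner_right]

omit [CompleteSpace H] in
theorem tsum_norm_inner_sq (hU : IsAnalysis φ U) (f : H) :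
    ∑' n, ‖(inner ℂ (φ n) f : ℂ)‖ ^ 2 = ‖U f‖ ^ 2 := by
  have h := lp.norm_rpow_eq_tsum (p := 2) (by norm_num) (U f)
  simp only [ENNReal.toReal_ofNat, Real.rpow_two] at h
  simp only [h, hU f]

end IsAnalysis

theorem isAnalysis_adjoint_single (Θ : H →L[ℂ] ℓ²) :
    IsAnalysis (fun n => adjoint Θ (lp.single 2 n (1 : ℂ))) Θ := by
  intro f n
  rw [adjoint_inner_left, lp.inner_single_left, RCLike.inner_apply, map_one, mul_one]

theorem IsAnalysis.approxDual {φ : ℕ → H} {U : H →L[ℂ] ℓ²} (hU : IsAnalysis φ U)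
    (Sinv A : H →L[ℂ] H) (Θ : H →L[ℂ] ℓ²) :
    IsAnalysis (approxDual φ Sinv A Θ) (U ∘L adjoint Sinv ∘L A + Θ) := by
  have h := (hU.map (adjoint A ∘L Sinv)).add (isAnalysis_adjoint_single Θ)
  rwa [adjoint_comp, adjoint_adjoint] at h

theorem adjoint_comp_approxDual_analysis {U Θ : H →L[ℂ] ℓ²} {S Sinv : H →L[ℂ] H}
    (hS : S = adjoint U ∘L U) (hSinv : Sinv ∘L S = ContinuousLinearMap.id ℂ H)
    (hΘ : adjoint U ∘L Θ = 0) (A : H →L[ℂ] H) :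
    adjoint U ∘L (U ∘L adjoint Sinv ∘L A + Θ) = A := by
  have hS_adj : adjoint S = S := by rw [hS, adjoint_comp, adjoint_adjoint]
  have hS_Sinv_adj : S ∘L adjoint Sinv = ContinuousLinearMap.id ℂ H := by
    rw [← hS_adj, ← adjoint_comp, hSinv, adjoint_id]
  rw [comp_add, hΘ, add_zero, ← comp_assoc, ← hS, ← comp_assoc, hS_Sinv_adj, id_comp]

theorem norm_le_mul_norm_adjoint_apply {E F : Type} [NormedAddCommGroup E]
    [InnerProductSpace ℂ E] [CompleteSpace E] [NormedAddCommGroup F] [InnerProductSpace ℂ F]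
    [CompleteSpace F] {T : F →L[ℂ] E} {U : E →L[ℂ] F} {A Ainv : E →L[ℂ] E}
    (hTU : T ∘L U = A) (hAinv : A ∘L Ainv = ContinuousLinearMap.id ℂ E) (f : E) :
    ‖f‖ ≤ ‖Ainv‖ * ‖U‖ * ‖adjoint T f‖ := by
  have hleft : (adjoint Ainv ∘L adjoint U) ∘L adjoint T = ContinuousLinearMap.id ℂ E := by
    rw [comp_assoc, ← adjoint_comp, hTU, ← adjoint_comp, hAinv, adjoint_id]
  calc ‖f‖ = ‖(adjoint Ainv ∘L adjoint U) (adjoint T f)‖ := by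
        rw [← comp_apply, hleft, id_apply]
    _ ≤ ‖adjoint Ainv‖ * ‖adjoint U‖ * ‖adjoint T f‖ :=
        (le_opNorm _ _).trans (by gcongr; exact opNorm_comp_le _ _)
    _ = ‖Ainv‖ * ‖U‖ * ‖adjoint T f‖ := by
        simp only [LinearIsometryEquiv.norm_map]

/-- When the set is unbounded its `sSup` is the junk value `0`, and `0⁻¹ = 0`. -/
theorem inv_sSup_setOf_mul_norm_sq_le {E : Type} [SeminormedAddCommGroup E] {q : E → ℝ}
    (hq : ∀ f, 0 ≤ q f) {C : ℝ} (hC : 0 ≤ C) (h : ∀ f, ‖f‖ ^ 2 ≤ C * q f) :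
    (sSup {m : ℝ | ∀ f, m * ‖f‖ ^ 2 ≤ q f})⁻¹ ≤ C := by
  rcases hC.eq_or_lt with rfl | hC
  · have huniv : {m : ℝ | ∀ f, m * ‖f‖ ^ 2 ≤ q f} = Set.univ := by
      refine Set.eq_univ_of_forall fun m f => ?_
      have hf : ‖f‖ ^ 2 = 0 := le_antisymm (by simpa using h f) (by positivity)
      rw [hf, mul_zero]
      exact hq f
    rw [huniv, Real.sSup_univ, inv_zero]
  by_cases hbdd : BddAbove {m : ℝ | ∀ f, m * ‖f‖ ^ 2 ≤ q f}
  · have hmem : C⁻¹ ∈ {m : ℝ | ∀ f, m * ‖f‖ ^ 2 ≤ q f} := fun f => by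
      rw [inv_mul_le_iff₀ hC]
      exact h f
    exact inv_le_of_inv_le₀ hC (le_csSup hbdd hmem)
  · rw [Real.sSup_of_not_bddAbove hbdd, inv_zero]
    exact hC.le

theorem stmt5_general
    (φ φad : ℕ → H) (mopt : ℝ)
    (UΦ Uad : H →L[ℂ] ℓ²) (TΦ : ℓ² →L[ℂ] H) (SΦ SΦinv A Ainv : H →L[ℂ] H)
    (Θ : H →L[ℂ] ℓ²)
    (hUΦ : IsAnalysis φ UΦ) (hTΦ : TΦ = adjoint UΦ) (hSΦ : SΦ = TΦ ∘L UΦ)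
    (hinv2 : SΦinv ∘L SΦ = ContinuousLinearMap.id ℂ H)
    (hAinv1 : A ∘L Ainv = ContinuousLinearMap.id ℂ H)
    (hΘ : TΦ ∘L Θ = 0)
    (hφad : ∀ n, φad n = adjoint A (SΦinv (φ n)) + adjoint Θ (lp.single 2 n (1 : ℂ)))
    (hUad : IsAnalysis φad Uad)
    (hmopt : mopt = sSup {m : ℝ | ∀ f : H, m * ‖f‖ ^ 2 ≤ ∑' n, ‖(inner ℂ (φ n) f : ℂ)‖ ^ 2}) :
    1 / (mopt * ‖Ainv‖ ^ 2) ≤ ‖Uad‖ ^ 2 := by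
  subst hTΦ
  have hφad_eq : φad = approxDual φ SΦinv A Θ := funext hφad
  have hUad_eq : Uad = UΦ ∘L adjoint SΦinv ∘L A + Θ :=
    hUad.unique (hφad_eq ▸ hUΦ.approxDual SΦinv A Θ)
  have hTU : adjoint UΦ ∘L Uad = A := hUad_eq ▸ adjoint_comp_approxDual_analysis hSΦ hinv2 hΘ A
  have hlower (f : H) : ‖f‖ ^ 2 ≤ (‖Ainv‖ * ‖Uad‖) ^ 2 * ‖UΦ f‖ ^ 2 := by
    have h := norm_le_mul_norm_adjoint_apply hTU hAinv1 f
    rw [adjoint_adjoint] at h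
    rw [← mul_pow]
    gcongr
  have hmopt_inv : mopt⁻¹ ≤ (‖Ainv‖ * ‖Uad‖) ^ 2 := by
    simp_rw [hmopt, hUΦ.tsum_norm_inner_sq]
    exact inv_sSup_setOf_mul_norm_sq_le (fun f => by positivity) (by positivity) hlower
  rcases (norm_nonneg Ainv).eq_or_lt with hAinv | hAinv
  · rw [← hAinv, zero_pow two_ne_zero, mul_zero, div_zero]
    positivity
  calc 1 / (mopt * ‖Ainv‖ ^ 2) = mopt⁻¹ / ‖Ainv‖ ^ 2 := by
        rw [one_div, mul_inv, div_eq_mul_inv]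
    _ ≤ (‖Ainv‖ * ‖Uad‖) ^ 2 / ‖Ainv‖ ^ 2 := by gcongr
    _ = ‖Uad‖ ^ 2 := by field_simp

theorem stmt5
    (φ φad : ℕ → H) (mΦ MΦ mopt : ℝ)
    (UΦ Uad : H →L[ℂ] ℓ²) (TΦ : ℓ² →L[ℂ] H) (SΦ SΦinv A Ainv : H →L[ℂ] H)
    (Θ : H →L[ℂ] ℓ²)
    (hUΦ : IsAnalysis φ UΦ) (hTΦ : TΦ = adjoint UΦ) (hSΦ : SΦ = TΦ ∘L UΦ)
    (hinv1 : SΦ ∘L SΦinv = ContinuousLinearMap.id ℂ H)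
    (hinv2 : SΦinv ∘L SΦ = ContinuousLinearMap.id ℂ H)
    (hΦ : IsFrame φ mΦ MΦ)
    (hA : ‖ContinuousLinearMap.id ℂ H - A‖ < 1)
    (hAinv1 : A ∘L Ainv = ContinuousLinearMap.id ℂ H)
    (hAinv2 : Ainv ∘L A = ContinuousLinearMap.id ℂ H)
    (hΘ : TΦ ∘L Θ = 0)
    (hφad : ∀ n, φad n = adjoint A (SΦinv (φ n)) + adjoint Θ (lp.single 2 n (1 : ℂ)))
    (hUad : IsAnalysis φad Uad)
    (hmopt : mopt = sSup {m : ℝ | ∀ f : H, m * ‖f‖ ^ 2 ≤ ∑' n, ‖(inner ℂ (φ n) f : ℂ)‖ ^ 2}) :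
    1 / (mopt * ‖Ainv‖ ^ 2) ≤ ‖Uad‖ ^ 2 :=
  stmt5_general φ φad mopt UΦ Uad TΦ SΦ SΦinv A Ainv Θ hUΦ hTΦ hSΦ hinv2 hAinv1 hΘ hφad hUad hmopt

end
end

section
/- Let Φ be a frame with lower bound m_Φ, Ψ a Bessel sequence with ‖T_Φ − T_Ψ‖ ≤ μ < √m_Φ (so Ψ is a frame), and A₁, A₂ ∈ B(H) with ‖Id − Aᵢ‖ < 1. Then the canonical approximately duals satisfy ‖T_{Φ₀^{ad}(A₁)} − T_{Ψ₀^{ad}(A₂)}‖ ≤ 2μ‖A₁‖/(√m_Φ(√m_Φ − μ)) + ‖A₁ − A₂‖/(√m_Φ − μ). -/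
open ContinuousLinearMap MeasureTheory
open scoped InnerProductSpace ComplexConjugate

noncomputable section

variable {H : Type} [NormedAddCommGroup H] [InnerProductSpace ℂ H] [CompleteSpace H]

/-!
Write `X = S_Φ⁻¹ T_Φ`, `Y = S_Ψ⁻¹ T_Ψ`. Then `P = U_Ψ Y` is the orthogonal projection onto
`R(U_Ψ)`, so `T_Ψ (1 - P) = 0`, and `X U_Φ = 1`; hence
`X - Y = S_Φ⁻¹ (T_Φ - T_Ψ) (1 - P) + X (U_Ψ - U_Φ) Y`.
Since `U_Φ` is bounded below by `√m_Φ` and `U_Ψ` by `√m_Φ - μ`, we have `‖S_Φ⁻¹‖ ≤ 1 / m_Φ`,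
`‖X‖ ≤ 1 / √m_Φ` and `‖Y‖ ≤ 1 / (√m_Φ - μ)`, so `‖X - Y‖ ≤ 2μ / (√m_Φ (√m_Φ - μ))`.
Finally `A₁* X - A₂* Y = A₁* (X - Y) + (A₁ - A₂)* Y`.
-/

lemma sub_mul_norm_le_of_norm_sub_le {𝕜 E F : Type*} [NontriviallyNormedField 𝕜]
    [SeminormedAddCommGroup E] [NormedSpace 𝕜 E] [SeminormedAddCommGroup F] [NormedSpace 𝕜 F]
    {U V : E →L[𝕜] F} {s μ : ℝ} (hU : ∀ x, s * ‖x‖ ≤ ‖U x‖) (hUV : ‖U - V‖ ≤ μ) (x : E) :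
    (s - μ) * ‖x‖ ≤ ‖V x‖ := by
  have h := (U - V).le_opNorm x
  have := norm_sub_norm_le (U x) (V x)
  rw [sub_apply] at h
  nlinarith [hU x, mul_le_mul_of_nonneg_right hUV (norm_nonneg x)]

section PseudoInverse

variable {𝕜 E F : Type*} [RCLike 𝕜]
  [NormedAddCommGroup E] [InnerProductSpace 𝕜 E] [CompleteSpace E]
  [NormedAddCommGroup F] [InnerProductSpace 𝕜 F] [CompleteSpace F]
  {U : E →L[𝕜] F} {R : E →L[𝕜] E}

lemma adjoint_comp_id_sub_eq_zero (hR : (adjoint U ∘L U) ∘L R = .id 𝕜 E) :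
    adjoint U ∘L (.id 𝕜 F - U ∘L (R ∘L adjoint U)) = 0 := by
  simp only [comp_sub, comp_id, ← comp_assoc, hR, id_comp, sub_self]

lemma inner_sub_self_apply_eq_zero (hR : (adjoint U ∘L U) ∘L R = .id 𝕜 E) (c : F) :
    ⟪c - U (R (adjoint U c)), U (R (adjoint U c))⟫_𝕜 = 0 := by
  rw [← adjoint_inner_left]
  simpa using congrArg (fun A => ⟪A c, R (adjoint U c)⟫_𝕜) (adjoint_comp_id_sub_eq_zero hR)

lemma norm_sq_eq_norm_sub_sq_add (hR : (adjoint U ∘L U) ∘L R = .id 𝕜 E) (c : F) :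
    ‖c‖ ^ 2 = ‖c - U (R (adjoint U c))‖ ^ 2 + ‖U (R (adjoint U c))‖ ^ 2 := by
  have h := norm_add_sq_eq_norm_sq_add_norm_sq_of_inner_eq_zero _ _
    (inner_sub_self_apply_eq_zero hR c)
  rwa [sub_add_cancel, ← sq, ← sq, ← sq] at h

lemma norm_id_sub_comp_le_one (hR : (adjoint U ∘L U) ∘L R = .id 𝕜 E) :
    ‖.id 𝕜 F - U ∘L (R ∘L adjoint U)‖ ≤ 1 :=
  opNorm_le_bound _ zero_le_one fun c => by
    have := norm_sq_eq_norm_sub_sq_add hR c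
    simp only [sub_apply, id_apply, comp_apply, one_mul]
    nlinarith [norm_nonneg c, norm_nonneg (c - U (R (adjoint U c)))]

lemma norm_comp_adjoint_le_inv {s : ℝ} (hs : 0 < s) (hU : ∀ x, s * ‖x‖ ≤ ‖U x‖)
    (hR : (adjoint U ∘L U) ∘L R = .id 𝕜 E) : ‖R ∘L adjoint U‖ ≤ s⁻¹ :=
  opNorm_le_bound _ (inv_nonneg.mpr hs.le) fun c => by
    have hUR : ‖U (R (adjoint U c))‖ ≤ ‖c‖ := by
      have := norm_sq_eq_norm_sub_sq_add hR c
      nlinarith [norm_nonneg c, norm_nonneg (U (R (adjoint U c)))]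
    rw [comp_apply, inv_mul_eq_div, le_div_iff₀' hs]
    exact (hU _).trans hUR

lemma norm_le_inv_sq {s : ℝ} (hs : 0 < s) (hU : ∀ x, s * ‖x‖ ≤ ‖U x‖)
    (hR : (adjoint U ∘L U) ∘L R = .id 𝕜 E) : ‖R‖ ≤ (s ^ 2)⁻¹ :=
  opNorm_le_bound _ (by positivity) fun y => by
    set g := R y
    have hg : (adjoint U ∘L U) g = y := by simpa using congrArg (· y) hR
    have key : s ^ 2 * ‖g‖ ^ 2 ≤ ‖y‖ * ‖g‖ := calc
      s ^ 2 * ‖g‖ ^ 2 = (s * ‖g‖) ^ 2 := by ring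
      _ ≤ ‖U g‖ ^ 2 := by gcongr; exact hU g
      _ = RCLike.re ⟪y, g⟫_𝕜 := by rw [apply_norm_sq_eq_inner_adjoint_left, hg]
      _ ≤ ‖y‖ * ‖g‖ := re_inner_le_norm y g
    rw [inv_mul_eq_div, le_div_iff₀' (by positivity)]
    rcases (norm_nonneg g).eq_or_lt with h0 | h0
    · rw [← h0]; simp
    · nlinarith

lemma norm_comp_adjoint_sub_comp_adjoint_le {U V : E →L[𝕜] F} {R R' : E →L[𝕜] E} {s μ : ℝ}
    (hs : 0 < s) (hμs : μ < s) (hU : ∀ x, s * ‖x‖ ≤ ‖U x‖) (hUV : ‖U - V‖ ≤ μ)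
    (hR : (adjoint U ∘L U) ∘L R = .id 𝕜 E) (hR_left : R ∘L (adjoint U ∘L U) = .id 𝕜 E)
    (hR' : (adjoint V ∘L V) ∘L R' = .id 𝕜 E) :
    ‖R ∘L adjoint U - R' ∘L adjoint V‖ ≤ 2 * μ / (s * (s - μ)) := by
  have hμ : 0 ≤ μ := (norm_nonneg _).trans hUV
  have hsμ : 0 < s - μ := sub_pos.mpr hμs
  have hV_low := sub_mul_norm_le_of_norm_sub_le hU hUV
  have hdecomp : R ∘L adjoint U - R' ∘L adjoint V =
      R ∘L adjoint (U - V) ∘L (.id 𝕜 F - V ∘L (R' ∘L adjoint V)) +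
        (R ∘L adjoint U) ∘L (V - U) ∘L (R' ∘L adjoint V) := by
    ext c
    have hV : adjoint V (V (R' (adjoint V c))) = adjoint V c := by
      have h := congrArg (· c) (adjoint_comp_id_sub_eq_zero hR')
      simp only [comp_apply, sub_apply, id_apply, map_sub, zero_apply] at h
      exact (sub_eq_zero.mp h).symm
    have hRU : R (adjoint U (U (R' (adjoint V c)))) = R' (adjoint V c) := by
      simpa using congrArg (· (R' (adjoint V c))) hR_left
    simp only [map_sub, add_apply, sub_apply, comp_apply, id_apply, hV, hRU]
    abel
  calc ‖R ∘L adjoint U - R' ∘L adjoint V‖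
      ≤ ‖R‖ * (‖adjoint (U - V)‖ * ‖.id 𝕜 F - V ∘L (R' ∘L adjoint V)‖) +
          ‖R ∘L adjoint U‖ * (‖V - U‖ * ‖R' ∘L adjoint V‖) := by
        rw [hdecomp]
        refine (norm_add_le _ _).trans (add_le_add ?_ ?_) <;>
          exact (opNorm_comp_le _ _).trans (by gcongr; exact opNorm_comp_le _ _)
    _ ≤ (s ^ 2)⁻¹ * (μ * 1) + s⁻¹ * (μ * (s - μ)⁻¹) := by
        rw [LinearIsometryEquiv.norm_map, norm_sub_rev V]
        gcongr
        exacts [norm_le_inv_sq hs hU hR, norm_id_sub_comp_le_one hR',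
          norm_comp_adjoint_le_inv hs hU hR, norm_comp_adjoint_le_inv hsμ hV_low hR']
    _ ≤ 2 * μ / (s * (s - μ)) := by
        rw [div_eq_mul_inv, mul_inv]
        have : (s ^ 2)⁻¹ ≤ s⁻¹ * (s - μ)⁻¹ := by
          rw [← mul_inv, sq]; gcongr; linarith
        nlinarith [mul_le_mul_of_nonneg_left this hμ]

lemma norm_adjoint_comp_sub_adjoint_comp_le {G : Type*} [NormedAddCommGroup G] [NormedSpace 𝕜 G]
    (A₁ A₂ : E →L[𝕜] F) (X Y : G →L[𝕜] F) :
    ‖adjoint A₁ ∘L X - adjoint A₂ ∘L Y‖ ≤ ‖A₁‖ * ‖X - Y‖ + ‖A₁ - A₂‖ * ‖Y‖ := by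
  have h : adjoint A₁ ∘L X - adjoint A₂ ∘L Y =
      adjoint A₁ ∘L (X - Y) + adjoint (A₁ - A₂) ∘L Y := by
    rw [map_sub, comp_sub, sub_comp]; abel
  rw [h, ← LinearIsometryEquiv.norm_map adjoint A₁,
    ← LinearIsometryEquiv.norm_map adjoint (A₁ - A₂)]
  exact (norm_add_le _ _).trans (add_le_add (opNorm_comp_le _ _) (opNorm_comp_le _ _))

end PseudoInverse

lemma IsAnalysis.norm_sq_apply {H : Type} [NormedAddCommGroup H] [InnerProductSpace ℂ H]
    {φ : ℕ → H} {U : H →L[ℂ] ℓ²} (hU : IsAnalysis φ U) (f : H) :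
    ‖U f‖ ^ 2 = ∑' n, ‖⟪φ n, f⟫_ℂ‖ ^ 2 := by
  have h := lp.norm_rpow_eq_tsum (p := 2) (by norm_num) (U f)
  simp only [ENNReal.toReal_ofNat, Real.rpow_two, hU f] at h
  exact h

lemma IsFrame.sqrt_mul_norm_le {H : Type} [NormedAddCommGroup H] [InnerProductSpace ℂ H]
    {φ : ℕ → H} {m M : ℝ} {U : H →L[ℂ] ℓ²} (hΦ : IsFrame φ m M)
    (hU : IsAnalysis φ U) (f : H) : √m * ‖f‖ ≤ ‖U f‖ := by
  have h : m * ‖f‖ ^ 2 ≤ ‖U f‖ ^ 2 := hU.norm_sq_apply f ▸ (hΦ.2.2 f).1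
  rw [← Real.sqrt_sq (norm_nonneg f), ← Real.sqrt_mul hΦ.1.le, ← Real.sqrt_sq (norm_nonneg (U f))]
  exact Real.sqrt_le_sqrt h

theorem stmt11_general
    (φ : ℕ → H) (mΦ MΦ μ : ℝ)
    (UΦ UΨ : H →L[ℂ] ℓ²) (TΦ TΨ : ℓ² →L[ℂ] H)
    (SΦ SΦinv SΨ SΨinv A1 A2 : H →L[ℂ] H)
    (hUΦ : IsAnalysis φ UΦ)
    (hTΦ : TΦ = adjoint UΦ) (hTΨ : TΨ = adjoint UΨ)
    (hSΦ : SΦ = TΦ ∘L UΦ) (hSΨ : SΨ = TΨ ∘L UΨ)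
    (hSΦ1 : SΦ ∘L SΦinv = ContinuousLinearMap.id ℂ H)
    (hSΦ2 : SΦinv ∘L SΦ = ContinuousLinearMap.id ℂ H)
    (hSΨ1 : SΨ ∘L SΨinv = ContinuousLinearMap.id ℂ H)
    (hΦ : IsFrame φ mΦ MΦ)
    (hμ : μ < Real.sqrt mΦ) (hper : ‖TΦ - TΨ‖ ≤ μ) :
    ‖adjoint A1 ∘L (SΦinv ∘L TΦ) - adjoint A2 ∘L (SΨinv ∘L TΨ)‖ ≤
      2 * μ * ‖A1‖ / (Real.sqrt mΦ * (Real.sqrt mΦ - μ)) +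
        ‖A1 - A2‖ / (Real.sqrt mΦ - μ) := by
  subst hTΦ hTΨ hSΦ hSΨ
  have hs : 0 < √mΦ := Real.sqrt_pos.mpr hΦ.1
  have hUΦ_low : ∀ f, √mΦ * ‖f‖ ≤ ‖UΦ f‖ := hΦ.sqrt_mul_norm_le hUΦ
  have hUΦΨ : ‖UΦ - UΨ‖ ≤ μ := by rwa [← LinearIsometryEquiv.norm_map adjoint, map_sub]
  have hΨ_inv : ‖SΨinv ∘L adjoint UΨ‖ ≤ (√mΦ - μ)⁻¹ :=
    norm_comp_adjoint_le_inv (sub_pos.mpr hμ) (sub_mul_norm_le_of_norm_sub_le hUΦ_low hUΦΨ) hSΨ1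
  calc _ ≤ ‖A1‖ * ‖SΦinv ∘L adjoint UΦ - SΨinv ∘L adjoint UΨ‖ +
        ‖A1 - A2‖ * ‖SΨinv ∘L adjoint UΨ‖ := norm_adjoint_comp_sub_adjoint_comp_le _ _ _ _
    _ ≤ ‖A1‖ * (2 * μ / (√mΦ * (√mΦ - μ))) + ‖A1 - A2‖ * (√mΦ - μ)⁻¹ := by
        gcongr
        exact norm_comp_adjoint_sub_comp_adjoint_le hs hμ hUΦ_low hUΦΨ hSΦ1 hSΦ2 hSΨ1
    _ = _ := by ring

theorem stmt11
    (φ ψ : ℕ → H) (mΦ MΦ MΨ μ : ℝ)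
    (UΦ UΨ : H →L[ℂ] ℓ²) (TΦ TΨ : ℓ² →L[ℂ] H)
    (SΦ SΦinv SΨ SΨinv A1 A2 : H →L[ℂ] H)
    (hUΦ : IsAnalysis φ UΦ) (hUΨ : IsAnalysis ψ UΨ)
    (hTΦ : TΦ = adjoint UΦ) (hTΨ : TΨ = adjoint UΨ)
    (hSΦ : SΦ = TΦ ∘L UΦ) (hSΨ : SΨ = TΨ ∘L UΨ)
    (hSΦ1 : SΦ ∘L SΦinv = ContinuousLinearMap.id ℂ H)
    (hSΦ2 : SΦinv ∘L SΦ = ContinuousLinearMap.id ℂ H)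
    (hSΨ1 : SΨ ∘L SΨinv = ContinuousLinearMap.id ℂ H)
    (hSΨ2 : SΨinv ∘L SΨ = ContinuousLinearMap.id ℂ H)
    (hΦ : IsFrame φ mΦ MΦ) (hΨ : IsBessel ψ MΨ)
    (hμ : μ < Real.sqrt mΦ) (hper : ‖TΦ - TΨ‖ ≤ μ)
    (hA1 : ‖ContinuousLinearMap.id ℂ H - A1‖ < 1)
    (hA2 : ‖ContinuousLinearMap.id ℂ H - A2‖ < 1) :
    ‖adjoint A1 ∘L (SΦinv ∘L TΦ) - adjoint A2 ∘L (SΨinv ∘L TΨ)‖ ≤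
      2 * μ * ‖A1‖ / (Real.sqrt mΦ * (Real.sqrt mΦ - μ)) +
        ‖A1 - A2‖ / (Real.sqrt mΦ - μ) :=
  stmt11_general φ mΦ MΦ μ UΦ UΨ TΦ TΨ SΦ SΦinv SΨ SΨinv A1 A2 hUΦ hTΦ hTΨ hSΦ hSΨ hSΦ1 hSΦ2 hSΨ1 hΦ
    hμ hper

end
end

section
/- Let Φ be a frame for H with lower bound m_Φ, Ψ a Bessel sequence with ‖T_Φ − T_Ψ‖ ≤ μ < √m_Φ, and A ∈ B(H) with ‖Id − A‖ < 1 having approximation rate ε = ‖Id − A‖. Then the synthesis operators of the canonical dual of Φ and the canonical approximately dual Ψ₀^{ad}(A) of Ψ satisfy ‖S_Φ⁻¹T_Φ − A* S_Ψ⁻¹ T_Ψ‖ ≤ (2μ‖A‖ + ε√m_Φ)/(√m_Φ(√m_Φ − μ)). -/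
/-!
Write `B = S_Φ⁻¹ T_Φ` and `C = S_Ψ⁻¹ T_Ψ`, so that `B - A* C = (Id - A*) B + A* (B - C)`.
The frame operator satisfies `‖S_Φ f‖ ≥ m_Φ ‖f‖`, hence `‖S_Φ⁻¹‖ ≤ 1/m_Φ` and `‖B‖ ≤ 1/√m_Φ`;
by perturbation `‖U_Ψ f‖ ≥ (√m_Φ - μ) ‖f‖`, so likewise `‖C‖ ≤ 1/(√m_Φ - μ)`. Finally
`B - C = S_Φ⁻¹ (T_Φ - T_Ψ) (Id - U_Ψ C) + B (U_Ψ - U_Φ) C`, where `U_Ψ C` is an orthogonal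
projection, which gives `‖B - C‖ ≤ 2μ / (√m_Φ (√m_Φ - μ))`.
-/

open ContinuousLinearMap MeasureTheory
open scoped InnerProductSpace ComplexConjugate

noncomputable section

variable {H : Type} [NormedAddCommGroup H] [InnerProductSpace ℂ H] [CompleteSpace H]

lemma IsSelfAdjoint.of_mul_eq_one {R : Type*} [Monoid R] [StarMul R] {a b : R}
    (ha : IsSelfAdjoint a) (hab : a * b = 1) : IsSelfAdjoint b :=
  left_inv_eq_right_inv (a := a) (by rw [← ha.star_eq, ← star_mul, hab, star_one]) hab

namespace ContinuousLinearMap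

section Normed

variable {𝕜 E F : Type*} [NontriviallyNormedField 𝕜]
  [NormedAddCommGroup E] [NormedSpace 𝕜 E] [NormedAddCommGroup F] [NormedSpace 𝕜 F]

lemma sub_mul_norm_le_norm_apply {U V : E →L[𝕜] F} {a μ : ℝ}
    (hU : ∀ f, a * ‖f‖ ≤ ‖U f‖) (hUV : ‖U - V‖ ≤ μ) (f : E) : (a - μ) * ‖f‖ ≤ ‖V f‖ := by
  have h : ‖U f‖ ≤ ‖V f‖ + μ * ‖f‖ := calc
    ‖U f‖ ≤ ‖V f‖ + ‖(U - V) f‖ := by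
      rw [sub_apply]; exact norm_le_norm_add_norm_sub' _ _
    _ ≤ ‖V f‖ + μ * ‖f‖ := by grw [le_opNorm (U - V) f, hUV]
  linarith [hU f]

lemma norm_le_inv_of_comp_eq_id {S Sinv : E →L[𝕜] E} {c : ℝ} (hc : 0 < c)
    (hS : ∀ f, c * ‖f‖ ≤ ‖S f‖) (hSinv : S ∘L Sinv = ContinuousLinearMap.id 𝕜 E) :
    ‖Sinv‖ ≤ c⁻¹ := by
  refine opNorm_le_bound _ (inv_nonneg.2 hc.le) fun g => ?_
  have h := hS (Sinv g)
  rw [← comp_apply, hSinv, id_apply] at h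
  rw [inv_mul_eq_div, le_div_iff₀ hc, mul_comm]
  exact h

lemma inverse_comp_sub_eq {TU TV : F →L[𝕜] E} {U V : E →L[𝕜] F}
    {SUinv SVinv : E →L[𝕜] E} (hU : SUinv ∘L (TU ∘L U) = ContinuousLinearMap.id 𝕜 E)
    (hV : (TV ∘L V) ∘L SVinv = ContinuousLinearMap.id 𝕜 E) :
    SUinv ∘L TU - SVinv ∘L TV =
      SUinv ∘L (TU - TV) ∘L (ContinuousLinearMap.id 𝕜 F - V ∘L SVinv ∘L TV)
        + (SUinv ∘L TU) ∘L (V - U) ∘L (SVinv ∘L TV) := by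
  have hU' : ∀ x, SUinv (TU (U x)) = x := fun x => congr($hU x)
  have hV' : ∀ x, TV (V (SVinv x)) = x := fun x => congr($hV x)
  ext x
  simp only [comp_apply, sub_apply, add_apply, coe_id', id_eq, map_sub, hU', hV']
  abel

end Normed

section Gram

variable {𝕜 E F : Type*} [RCLike 𝕜]
  [NormedAddCommGroup E] [InnerProductSpace 𝕜 E] [CompleteSpace E]
  [NormedAddCommGroup F] [InnerProductSpace 𝕜 F] [CompleteSpace F]
  {U : E →L[𝕜] F} {Sinv : E →L[𝕜] E}

lemma sq_mul_norm_le_norm_adjoint_comp_self_apply {a : ℝ} (ha : 0 ≤ a)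
    (hU : ∀ f, a * ‖f‖ ≤ ‖U f‖) (f : E) : a ^ 2 * ‖f‖ ≤ ‖(adjoint U ∘L U) f‖ := by
  have h : (a * ‖f‖) ^ 2 ≤ ‖f‖ * ‖(adjoint U ∘L U) f‖ := calc
    (a * ‖f‖) ^ 2 ≤ ‖U f‖ ^ 2 := by gcongr; exact hU f
    _ = RCLike.re ⟪(adjoint U ∘L U) f, f⟫_𝕜 := apply_norm_sq_eq_inner_adjoint_left U f
    _ ≤ ‖f‖ * ‖(adjoint U ∘L U) f‖ := by
      rw [mul_comm]; exact re_inner_le_norm _ _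
  rcases (norm_nonneg f).eq_or_lt with hf | hf
  · rw [← hf, mul_zero]; exact norm_nonneg _
  · nlinarith

lemma isSelfAdjoint_of_adjoint_comp_self_comp_eq_id
    (hSinv : (adjoint U ∘L U) ∘L Sinv = ContinuousLinearMap.id 𝕜 E) : IsSelfAdjoint Sinv :=
  (isPositive_adjoint_comp_self U).isSelfAdjoint.of_mul_eq_one hSinv

lemma norm_inverse_comp_adjoint_le {a : ℝ} (ha : 0 < a)
    (hU : ∀ f, a * ‖f‖ ≤ ‖U f‖) (hS1 : (adjoint U ∘L U) ∘L Sinv = ContinuousLinearMap.id 𝕜 E)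
    (hS2 : Sinv ∘L (adjoint U ∘L U) = ContinuousLinearMap.id 𝕜 E) : ‖Sinv ∘L adjoint U‖ ≤ a⁻¹ := by
  have hSinv : IsSelfAdjoint Sinv := isSelfAdjoint_of_adjoint_comp_self_comp_eq_id hS1
  -- For `B = Sinv U†` we have `B B† = Sinv (U† U) Sinv = Sinv`; the C⋆-identity gives `‖B‖² = ‖Sinv‖`.
  have hBB : (Sinv ∘L adjoint U) ∘L adjoint (Sinv ∘L adjoint U) = Sinv := by
    rw [adjoint_comp, adjoint_adjoint, hSinv.adjoint_eq, comp_assoc, ← comp_assoc _ U,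
      ← comp_assoc Sinv, hS2, id_comp]
  have hnorm : ‖Sinv ∘L adjoint U‖ ^ 2 ≤ (a⁻¹) ^ 2 := by
    rw [sq, ← LinearIsometryEquiv.norm_map adjoint, ← norm_adjoint_comp_self, adjoint_adjoint,
      hBB, inv_pow]
    exact norm_le_inv_of_comp_eq_id (by positivity)
      (sq_mul_norm_le_norm_adjoint_comp_self_apply ha.le hU) hS1
  exact (pow_le_pow_iff_left₀ (norm_nonneg _) (inv_nonneg.2 ha.le) two_ne_zero).1 hnorm

lemma isStarProjection_comp_inverse_comp_adjoint
    (hS1 : (adjoint U ∘L U) ∘L Sinv = ContinuousLinearMap.id 𝕜 E)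
    (hS2 : Sinv ∘L (adjoint U ∘L U) = ContinuousLinearMap.id 𝕜 E) :
    IsStarProjection (U ∘L Sinv ∘L adjoint U) where
  isIdempotentElem := by
    have h : ∀ x, Sinv (adjoint U (U x)) = x := fun x => congr($hS2 x)
    ext x
    simp only [mul_def, comp_apply, h]
  isSelfAdjoint := by
    rw [isSelfAdjoint_iff', adjoint_comp, adjoint_comp, adjoint_adjoint,
      (isSelfAdjoint_of_adjoint_comp_self_comp_eq_id hS1).adjoint_eq, comp_assoc]

theorem norm_inverse_comp_adjoint_sub_le {U V : E →L[𝕜] F} {SUinv SVinv : E →L[𝕜] E} {a μ : ℝ}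
    (ha : 0 < a) (hμa : μ < a) (hU : ∀ f, a * ‖f‖ ≤ ‖U f‖) (hUV : ‖U - V‖ ≤ μ)
    (hSU1 : (adjoint U ∘L U) ∘L SUinv = ContinuousLinearMap.id 𝕜 E)
    (hSU2 : SUinv ∘L (adjoint U ∘L U) = ContinuousLinearMap.id 𝕜 E)
    (hSV1 : (adjoint V ∘L V) ∘L SVinv = ContinuousLinearMap.id 𝕜 E)
    (hSV2 : SVinv ∘L (adjoint V ∘L V) = ContinuousLinearMap.id 𝕜 E) :
    ‖SUinv ∘L adjoint U - SVinv ∘L adjoint V‖ ≤ 2 * μ / (a * (a - μ)) := by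
  have hμ : 0 ≤ μ := (norm_nonneg _).trans hUV
  have hμa' : 0 < a - μ := sub_pos.2 hμa
  have hSU : ‖SUinv‖ ≤ (a ^ 2)⁻¹ :=
    norm_le_inv_of_comp_eq_id (by positivity)
      (sq_mul_norm_le_norm_adjoint_comp_self_apply ha.le hU) hSU1
  have hBU := norm_inverse_comp_adjoint_le ha hU hSU1 hSU2
  have hBV := norm_inverse_comp_adjoint_le hμa' (sub_mul_norm_le_norm_apply hU hUV) hSV1 hSV2
  have hQ : ‖ContinuousLinearMap.id 𝕜 F - V ∘L SVinv ∘L adjoint V‖ ≤ 1 :=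
    (isStarProjection_comp_inverse_comp_adjoint hSV1 hSV2).one_sub.norm_le
  have hadj : ‖adjoint U - adjoint V‖ ≤ μ := by rwa [← map_sub, LinearIsometryEquiv.norm_map]
  rw [inverse_comp_sub_eq hSU2 hSV1]
  calc _ ≤ ‖SUinv‖ * ‖adjoint U - adjoint V‖
          * ‖ContinuousLinearMap.id 𝕜 F - V ∘L SVinv ∘L adjoint V‖
        + ‖SUinv ∘L adjoint U‖ * ‖V - U‖ * ‖SVinv ∘L adjoint V‖ := by
        grw [norm_add_le, opNorm_comp_le SUinv, opNorm_comp_le (adjoint U - adjoint V),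
          opNorm_comp_le (SUinv ∘L adjoint U), opNorm_comp_le (V - U), mul_assoc, mul_assoc]
    _ ≤ (a ^ 2)⁻¹ * μ * 1 + a⁻¹ * μ * (a - μ)⁻¹ := by
        rw [norm_sub_rev V]; gcongr
    _ ≤ (a * (a - μ))⁻¹ * μ * 1 + a⁻¹ * μ * (a - μ)⁻¹ := by
        gcongr; nlinarith
    _ = 2 * μ / (a * (a - μ)) := by field_simp; ring

end Gram

end ContinuousLinearMap

lemma IsFrame.sqrt_mul_norm_le_norm_apply {G : Type} [NormedAddCommGroup G]
    [InnerProductSpace ℂ G] {φ : ℕ → G} {m M : ℝ} {U : G →L[ℂ] ℓ²}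
    (hφ : IsFrame φ m M) (hU : IsAnalysis φ U) (f : G) : √m * ‖f‖ ≤ ‖U f‖ := by
  have hnorm : ‖U f‖ ^ 2 = ∑' n, ‖(inner ℂ (φ n) f : ℂ)‖ ^ 2 := by
    simpa [Real.rpow_two, hU f] using lp.norm_rpow_eq_tsum (p := 2) (by norm_num) (U f)
  rw [← Real.sqrt_sq (norm_nonneg (U f)), ← Real.sqrt_sq (norm_nonneg f),
    ← Real.sqrt_mul hφ.1.le, hnorm]
  exact Real.sqrt_le_sqrt (hφ.2.2 f).1

theorem stmt12_general
    (φ : ℕ → H) (mΦ MΦ μ : ℝ)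
    (UΦ UΨ : H →L[ℂ] ℓ²) (TΦ TΨ : ℓ² →L[ℂ] H)
    (SΦ SΦinv SΨ SΨinv A : H →L[ℂ] H)
    (hUΦ : IsAnalysis φ UΦ)
    (hTΦ : TΦ = adjoint UΦ) (hTΨ : TΨ = adjoint UΨ)
    (hSΦ : SΦ = TΦ ∘L UΦ) (hSΨ : SΨ = TΨ ∘L UΨ)
    (hSΦ1 : SΦ ∘L SΦinv = ContinuousLinearMap.id ℂ H)
    (hSΦ2 : SΦinv ∘L SΦ = ContinuousLinearMap.id ℂ H)
    (hSΨ1 : SΨ ∘L SΨinv = ContinuousLinearMap.id ℂ H)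
    (hSΨ2 : SΨinv ∘L SΨ = ContinuousLinearMap.id ℂ H)
    (hΦ : IsFrame φ mΦ MΦ)
    (hμ : μ < Real.sqrt mΦ) (hper : ‖TΦ - TΨ‖ ≤ μ) :
    ‖SΦinv ∘L TΦ - adjoint A ∘L (SΨinv ∘L TΨ)‖ ≤
      (2 * μ * ‖A‖ + ‖ContinuousLinearMap.id ℂ H - A‖ * Real.sqrt mΦ) /
        (Real.sqrt mΦ * (Real.sqrt mΦ - μ)) := by
  subst hTΦ hTΨ hSΦ hSΨ
  set a := Real.sqrt mΦ
  set ε := ‖ContinuousLinearMap.id ℂ H - A‖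
  have ha : 0 < a := Real.sqrt_pos.2 hΦ.1
  have hlow := hΦ.sqrt_mul_norm_le_norm_apply hUΦ
  have hUΦΨ : ‖UΦ - UΨ‖ ≤ μ := by rwa [← LinearIsometryEquiv.norm_map adjoint, map_sub]
  have hdual := norm_inverse_comp_adjoint_sub_le ha hμ hlow hUΦΨ hSΦ1 hSΦ2 hSΨ1 hSΨ2
  have hB := norm_inverse_comp_adjoint_le ha hlow hSΦ1 hSΦ2
  have hε : ‖ContinuousLinearMap.id ℂ H - adjoint A‖ = ε := by
    rw [← adjoint_id, ← map_sub, LinearIsometryEquiv.norm_map]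
  calc _ = ‖(ContinuousLinearMap.id ℂ H - adjoint A) ∘L (SΦinv ∘L adjoint UΦ)
          + adjoint A ∘L (SΦinv ∘L adjoint UΦ - SΨinv ∘L adjoint UΨ)‖ := by
        rw [sub_comp, comp_sub, id_comp]; abel_nf
    _ ≤ ε * a⁻¹ + ‖A‖ * (2 * μ / (a * (a - μ))) := by
        grw [norm_add_le, opNorm_comp_le (_ - adjoint A), opNorm_comp_le (adjoint A), hε, hB, hdual,
          LinearIsometryEquiv.norm_map]
    _ ≤ _ := by
        have hμ0 : 0 ≤ μ := (norm_nonneg _).trans hper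
        have : 0 < a - μ := sub_pos.2 hμ
        field_simp
        nlinarith [norm_nonneg (ContinuousLinearMap.id ℂ H - A)]

theorem stmt12
    (φ ψ : ℕ → H) (mΦ MΦ MΨ μ : ℝ)
    (UΦ UΨ : H →L[ℂ] ℓ²) (TΦ TΨ : ℓ² →L[ℂ] H)
    (SΦ SΦinv SΨ SΨinv A : H →L[ℂ] H)
    (hUΦ : IsAnalysis φ UΦ) (hUΨ : IsAnalysis ψ UΨ)
    (hTΦ : TΦ = adjoint UΦ) (hTΨ : TΨ = adjoint UΨ)
    (hSΦ : SΦ = TΦ ∘L UΦ) (hSΨ : SΨ = TΨ ∘L UΨ)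
    (hSΦ1 : SΦ ∘L SΦinv = ContinuousLinearMap.id ℂ H)
    (hSΦ2 : SΦinv ∘L SΦ = ContinuousLinearMap.id ℂ H)
    (hSΨ1 : SΨ ∘L SΨinv = ContinuousLinearMap.id ℂ H)
    (hSΨ2 : SΨinv ∘L SΨ = ContinuousLinearMap.id ℂ H)
    (hΦ : IsFrame φ mΦ MΦ) (hΨ : IsBessel ψ MΨ)
    (hμ : μ < Real.sqrt mΦ) (hper : ‖TΦ - TΨ‖ ≤ μ)
    (hA : ‖ContinuousLinearMap.id ℂ H - A‖ < 1) :
    ‖SΦinv ∘L TΦ - adjoint A ∘L (SΨinv ∘L TΨ)‖ ≤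
      (2 * μ * ‖A‖ + ‖ContinuousLinearMap.id ℂ H - A‖ * Real.sqrt mΦ) /
        (Real.sqrt mΦ * (Real.sqrt mΦ - μ)) :=
  stmt12_general φ mΦ MΦ μ UΦ UΨ TΦ TΨ SΦ SΦinv SΨ SΨinv A hUΦ hTΦ hTΨ hSΦ hSΨ hSΦ1 hSΦ2 hSΨ1 hSΨ2
    hΦ hμ hper

end
end
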